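/- Let s ≥ 1 be a natural number and suppose ψ ∈ ℝ satisfies Ψ^{s−1}(t) ≤ ψ for all times t ≥ 0. Then Ψ^s(t) ≤ Ψ^s(0) + (ρ/μ)·ψ for all t with 0 ≤ t ≤ ψ/μ, and Ψ^s(t) ≤ (ρ/μ)·ψ for all t > ψ/μ. -/

import Mathlib

open Finset

variable {V : Type*}

/-- Node `v` satisfies the *fast condition* at time `t`. -/
def fastCond (G : SimpleGraph V) (L : V → ℝ → ℝ) (κ : ℝ) (v : V) (t : ℝ) : Prop :=
  ∃ s : ℕ, (∃ x, G.Adj v x ∧ (2 * (s : ℝ) + 1) * κ ≤ L x t - L v t) ∧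
    ∀ y, G.Adj v y → L v t - L y t ≤ (2 * (s : ℝ) + 1) * κ

/-- Node `v` satisfies the *slow condition* at time `t`. -/
def slowCond (G : SimpleGraph V) (L : V → ℝ → ℝ) (κ : ℝ) (v : V) (t : ℝ) : Prop :=
  ∃ s : ℕ, (∃ x, G.Adj v x ∧ 2 * (s : ℝ) * κ ≤ L v t - L x t) ∧
    ∀ y, G.Adj v y → L y t - L v t ≤ 2 * (s : ℝ) * κ

/-- `Ψ_v^s(t) = max_{w ∈ V} (L_w(t) - L_v(t) - 2sκ·d(v,w))`. -/
noncomputable def Psi [Fintype V] [Nonempty V] (G : SimpleGraph V) (L : V → ℝ → ℝ)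
    (κ : ℝ) (s : ℕ) (v : V) (t : ℝ) : ℝ :=
  univ.sup' univ_nonempty fun w => L w t - L v t - 2 * (s : ℝ) * κ * (G.dist v w)

/-- `Ψ^s(t) = max_{v ∈ V} Ψ_v^s(t)`. -/
noncomputable def PsiMax [Fintype V] [Nonempty V] (G : SimpleGraph V) (L : V → ℝ → ℝ)
    (κ : ℝ) (s : ℕ) (t : ℝ) : ℝ :=
  univ.sup' univ_nonempty fun v => Psi G L κ s v t

/-- `Ξ_v^s(t) = max_{w ∈ V} (L_v(t) - L_w(t) - (2s+1)κ·d(v,w))`. -/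
noncomputable def Xi [Fintype V] [Nonempty V] (G : SimpleGraph V) (L : V → ℝ → ℝ)
    (κ : ℝ) (s : ℕ) (v : V) (t : ℝ) : ℝ :=
  univ.sup' univ_nonempty fun w => L v t - L w t - (2 * (s : ℝ) + 1) * κ * (G.dist v w)

/-- The global skew `𝒢(t) = max_{v,w ∈ V} |L_v(t) - L_w(t)|`. -/
noncomputable def GSkew [Fintype V] [Nonempty V] (L : V → ℝ → ℝ) (t : ℝ) : ℝ :=
  univ.sup' univ_nonempty fun p : V × V => |L p.1 t - L p.2 t|

/-!
`Ψ^s` grows at rate at most `ρ`: a maximiser `w ≠ v` of `Ψ_v^s` satisfies the slow condition while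
`v` runs at rate at least `1`. This gives the first bound.

For the second, put `t₀ = t - ψ/μ` and show that `Ψ^s` stays below the line
`ψ - (μ - ρ)(· - t₀)` on `[t₀, t]`. At a first crossing, take a maximising pair `(v, w)`: `w` is
slow, and `v` is fast unless `Ξ_v^{s-1} > 0`. That case is excluded using
`Ψ_v^s + Ξ_v^{s-1} ≤ Ψ^{s-1} ≤ ψ`: this sum decreases at rate `μ - ρ` as long as both terms are
positive, and we follow it back to the last time one of them vanished.
-/

open Set Filter Topology

lemma exists_first_crossing {f g : ℝ → ℝ} (hf : Continuous f) (hg : Continuous g) {a b : ℝ}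
    (hab : a ≤ b) (ha : f a < g a) (hb : g b < f b) :
    ∃ c ∈ Ioo a b, f c = g c ∧ (∀ u ∈ Icc a c, f u ≤ g u) ∧ ∃ᶠ u in 𝓝[>] c, g u < f u := by
  set S := Icc a b ∩ {u | g u < f u}
  have hbS : b ∈ S := ⟨⟨hab, le_rfl⟩, hb⟩
  have hS : BddBelow S := ⟨a, fun u hu => hu.1.1⟩
  obtain ⟨c, rfl⟩ : ∃ c, c = sInf S := ⟨_, rfl⟩
  have hac : a ≤ sInf S := le_csInf ⟨b, hbS⟩ fun u hu => hu.1.1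
  have hcb : sInf S ≤ b := csInf_le hS hbS
  have hbefore : ∀ u ∈ Ico a (sInf S), f u ≤ g u := fun u hu =>
    not_lt.mp fun h => (csInf_le hS ⟨⟨hu.1, hu.2.le.trans hcb⟩, h⟩).not_gt hu.2
  have hge : g (sInf S) ≤ f (sInf S) :=
    closure_minimal (fun u (hu : u ∈ S) => show g u ≤ f u from hu.2.le) (isClosed_le hg hf)
      (csInf_mem_closure ⟨b, hbS⟩ hS)
  have hac' : a < sInf S := hac.lt_of_ne fun h => by rw [← h] at hge; exact hge.not_gt ha
  have hle : f (sInf S) ≤ g (sInf S) :=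
    closure_minimal hbefore (isClosed_le hf hg) (by rw [closure_Ico hac'.ne]; exact ⟨hac, le_rfl⟩)
  have heq := le_antisymm hle hge
  have hcb' : sInf S < b := hcb.lt_of_ne fun h => by rw [h] at heq; exact heq.not_gt hb
  refine ⟨sInf S, ⟨hac', hcb'⟩, heq, fun u hu => ?_, frequently_iff.2 fun hU => ?_⟩
  · rcases hu.2.lt_or_eq with h | rfl
    · exact hbefore u ⟨hu.1, h⟩
    · exact hle
  · obtain ⟨d, hd, hdU⟩ := mem_nhdsGT_iff_exists_Ioo_subset.1 hU
    obtain ⟨u, huS, hud⟩ := exists_lt_of_csInf_lt ⟨b, hbS⟩ hd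
    have hcu : sInf S < u :=
      (csInf_le hS huS).lt_of_ne fun h => by rw [h] at heq; exact heq.not_gt huS.2
    exact ⟨u, hdU ⟨hcu, hud⟩, huS.2⟩

lemma exists_last_mem {A : Set ℝ} (hA : IsClosed A) {a c : ℝ} (ha : a ∈ A) (hac : a ≤ c) :
    ∃ r ∈ Icc a c, r ∈ A ∧ ∀ u ∈ Ioo r c, u ∉ A := by
  have hK : IsCompact (A ∩ Icc a c) := isCompact_Icc.inter_left hA
  obtain ⟨hrA, hr⟩ := hK.sSup_mem ⟨a, ha, le_rfl, hac⟩
  exact ⟨_, hr, hrA, fun u hu huA =>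
    (le_csSup hK.bddAbove ⟨huA, hr.1.trans hu.1.le, hu.2.le⟩).not_gt hu.1⟩

lemma eventually_lt_of_hasDerivAt_lt {ι : Type*} [Finite ι] {F F' : ι → ℝ → ℝ} {M : ℝ → ℝ}
    {c r : ℝ} (hF : ∀ i, HasDerivAt (F i) (F' i c) c) (hle : ∀ i, F i c ≤ M c)
    (hatt : ∀ u, ∃ i, F i u = M u) (hr : ∀ i, F i c = M c → F' i c < r) :
    ∀ᶠ u in 𝓝[>] c, M u < M c + r * (u - c) := by
  have hF_lt : ∀ i, ∀ᶠ u in 𝓝[>] c, F i u < M c + r * (u - c) := by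
    intro i
    rcases (hle i).lt_or_eq with hlt | heq
    · refine Eventually.filter_mono nhdsWithin_le_nhds ?_
      exact (hF i).continuousAt.eventually_lt (by fun_prop) (by simpa using hlt)
    · filter_upwards [(hF i).hasDerivWithinAt.limsup_slope_le' (lt_irrefl c) (hr i heq),
        self_mem_nhdsWithin] with u hslope (hu : c < u)
      rw [slope_def_field, div_lt_iff₀ (sub_pos.2 hu)] at hslope
      linarith
  filter_upwards [eventually_all.2 hF_lt] with u hu
  obtain ⟨i, hi⟩ := hatt u
  exact hi ▸ hu i

/-- Barrier principle for `M = max_i F i`. At the crossing point `c`, the slope condition may use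
that `M` has stayed below the line up to `c`. -/
lemma le_add_mul_of_crossing {ι : Type*} [Fintype ι] {F F' : ι → ℝ → ℝ} {M : ℝ → ℝ}
    (hF : ∀ i x, HasDerivAt (F i) (F' i x) x) (hle : ∀ i x, F i x ≤ M x)
    (hatt : ∀ x, ∃ i, F i x = M x) {a b Z σ : ℝ} (hab : a ≤ b) (ha : M a ≤ Z)
    (hslope : ∀ c ∈ Ioo a b, Z + σ * (c - a) < M c →
      (∀ u ∈ Icc a c, M u - σ * u ≤ M c - σ * c) → ∀ i, F i c = M c → F' i c ≤ σ) :
    M b ≤ Z + σ * (b - a) := by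
  have hM : Continuous M := by
    obtain ⟨i₀, -⟩ := hatt 0
    have hsup : M = fun x => univ.sup' ⟨i₀, mem_univ _⟩ fun i => F i x :=
      funext fun x => le_antisymm
        (by obtain ⟨i, hi⟩ := hatt x; exact hi ▸ le_sup' (F · x) (mem_univ i))
        (Finset.sup'_le _ _ fun i _ => hle i x)
    rw [hsup]
    exact Continuous.finset_sup'_apply _ fun i _ =>
      continuous_iff_continuousAt.2 fun x => (hF i x).continuousAt
  refine le_of_forall_pos_lt_add fun ε hε => ?_
  by_contra! hcon
  set η := ε / (2 * (b - a + 1))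
  have hη : 0 < η := by positivity
  have hηb : η * (b - a + 1) = ε / 2 := by
    have : 0 < b - a + 1 := by linarith
    simp only [η]; field_simp
  obtain ⟨c, hc, hMc, hbefore, hfreq⟩ :=
    exists_first_crossing hM (g := fun x => Z + σ * (x - a) + η * (x - a + 1)) (by fun_prop) hab
      (by linarith) (by linarith)
  have hcross : Z + σ * (c - a) < M c := by nlinarith [hc.1]
  have hhist : ∀ u ∈ Icc a c, M u - σ * u ≤ M c - σ * c := fun u hu => by
    nlinarith [hbefore u hu, hu.2]
  have hlt : ∀ i, F i c = M c → F' i c < σ + η := fun i hi =>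
    (hslope c hc hcross hhist i hi).trans_lt (by linarith)
  obtain ⟨u, hu_above, hu_below⟩ := (hfreq.and_eventually
    (eventually_lt_of_hasDerivAt_lt (fun i => hF i c) (fun i => hle i c) hatt hlt)).exists
  rw [hMc] at hu_below
  linarith

lemma hasDerivAt_sub_sub_const {L : V → ℝ → ℝ} (hdiff : ∀ v, Differentiable ℝ (L v)) (w v : V)
    (C x : ℝ) : HasDerivAt (fun u => L w u - L v u - C) (deriv (L w) x - deriv (L v) x) x :=
  ((hdiff w x).hasDerivAt.sub (hdiff v x).hasDerivAt).sub_const C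

namespace SimpleGraph

variable {G : SimpleGraph V}

lemma Connected.exists_adj_dist_add_one_eq (hconn : G.Connected) {v w : V} (hne : v ≠ w) :
    ∃ x, G.Adj w x ∧ G.dist v x + 1 = G.dist v w := by
  obtain ⟨p, hp⟩ := hconn.exists_walk_length_eq_dist w v
  have hnil : ¬p.Nil := fun h => hne h.eq.symm
  have h₁ : G.dist p.snd v ≤ p.tail.length := dist_le _
  have h₂ := p.length_tail_add_one hnil
  have h₃ : G.dist w v ≤ G.dist w p.snd + G.dist p.snd v := hconn.dist_triangle
  have h₄ : G.dist w p.snd = 1 := dist_eq_one_iff_adj.2 (p.adj_snd hnil)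
  refine ⟨p.snd, p.adj_snd hnil, ?_⟩
  rw [dist_comm (u := v), dist_comm (u := v)]
  omega

lemma Adj.dist_le_add_one {w y : V} (hadj : G.Adj w y) (v : V) :
    G.dist v y ≤ G.dist v w + 1 := by
  simpa [dist_eq_one_iff_adj.2 hadj] using hadj.reachable.dist_triangle_right v

end SimpleGraph

section Potentials

variable [Fintype V] [Nonempty V] (G : SimpleGraph V) (L : V → ℝ → ℝ) (κ : ℝ)

lemma le_psi (s : ℕ) (v w : V) (t : ℝ) :
    L w t - L v t - 2 * s * κ * G.dist v w ≤ Psi G L κ s v t :=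
  le_sup' (fun w => L w t - L v t - 2 * s * κ * G.dist v w) (mem_univ w)

lemma exists_eq_psi (s : ℕ) (v : V) (t : ℝ) :
    ∃ w, L w t - L v t - 2 * s * κ * G.dist v w = Psi G L κ s v t := by
  obtain ⟨w, -, hw⟩ := exists_mem_eq_sup' univ_nonempty
    fun w => L w t - L v t - 2 * s * κ * G.dist v w
  exact ⟨w, hw.symm⟩

lemma psi_le_psiMax (s : ℕ) (v : V) (t : ℝ) : Psi G L κ s v t ≤ PsiMax G L κ s t :=
  le_sup' (fun v => Psi G L κ s v t) (mem_univ v)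

lemma exists_psi_eq_psiMax (s : ℕ) (t : ℝ) : ∃ v, Psi G L κ s v t = PsiMax G L κ s t := by
  obtain ⟨v, -, hv⟩ := exists_mem_eq_sup' univ_nonempty fun v => Psi G L κ s v t
  exact ⟨v, hv.symm⟩

lemma le_xi (k : ℕ) (v z : V) (t : ℝ) :
    L v t - L z t - (2 * k + 1) * κ * G.dist v z ≤ Xi G L κ k v t :=
  le_sup' (fun z => L v t - L z t - (2 * k + 1) * κ * G.dist v z) (mem_univ z)

lemma exists_eq_xi (k : ℕ) (v : V) (t : ℝ) :
    ∃ z, L v t - L z t - (2 * k + 1) * κ * G.dist v z = Xi G L κ k v t := by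
  obtain ⟨z, -, hz⟩ := exists_mem_eq_sup' univ_nonempty
    fun z => L v t - L z t - (2 * k + 1) * κ * G.dist v z
  exact ⟨z, hz.symm⟩

lemma xi_nonneg (k : ℕ) (v : V) (t : ℝ) : 0 ≤ Xi G L κ k v t := by
  simpa using le_xi G L κ k v v t

lemma psiMax_nonneg (s : ℕ) (t : ℝ) : 0 ≤ PsiMax G L κ s t := by
  obtain ⟨v⟩ := ‹Nonempty V›
  simpa using (le_psi G L κ s v v t).trans (psi_le_psiMax G L κ s v t)

variable {G L κ}

lemma continuous_psi (hdiff : ∀ v, Differentiable ℝ (L v)) (s : ℕ) (v : V) :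
    Continuous (Psi G L κ s v) :=
  Continuous.finset_sup'_apply _ fun w _ =>
    ((hdiff w).continuous.sub (hdiff v).continuous).sub continuous_const

lemma continuous_xi (hdiff : ∀ v, Differentiable ℝ (L v)) (k : ℕ) (v : V) :
    Continuous (Xi G L κ k v) :=
  Continuous.finset_sup'_apply _ fun z _ =>
    ((hdiff v).continuous.sub (hdiff z).continuous).sub continuous_const

lemma psi_succ_add_xi_le_psiMax (hconn : G.Connected) (hκ : 0 ≤ κ) (k : ℕ) (v : V) (t : ℝ) :
    Psi G L κ (k + 1) v t + Xi G L κ k v t ≤ PsiMax G L κ k t := by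
  obtain ⟨w, hw⟩ := exists_eq_psi G L κ (k + 1) v t
  obtain ⟨z, hz⟩ := exists_eq_xi G L κ k v t
  have hzw := (le_psi G L κ k z w t).trans (psi_le_psiMax G L κ k z t)
  have htri : (G.dist z w : ℝ) ≤ G.dist v z + G.dist v w := by
    rw [SimpleGraph.dist_comm (u := v) (v := z)]
    exact_mod_cast hconn.dist_triangle
  have hkκ : 0 ≤ 2 * (k : ℝ) * κ := by positivity
  rw [← hw, ← hz]
  push_cast
  nlinarith [mul_le_mul_of_nonneg_left htri hkκ,
    mul_nonneg hκ (Nat.cast_nonneg (α := ℝ) (G.dist v w)),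
    mul_nonneg hκ (Nat.cast_nonneg (α := ℝ) (G.dist v z))]

lemma psiMax_succ_le_psiMax (hconn : G.Connected) (hκ : 0 ≤ κ) (k : ℕ) (t : ℝ) :
    PsiMax G L κ (k + 1) t ≤ PsiMax G L κ k t :=
  Finset.sup'_le _ _ fun v _ => by
    linarith [psi_succ_add_xi_le_psiMax (L := L) hconn hκ k v t, xi_nonneg G L κ k v t]

lemma slowCond_of_eq_psi (hconn : G.Connected) (hκ : 0 ≤ κ) {s : ℕ} {v w : V} {t : ℝ}
    (hne : w ≠ v) (hw : L w t - L v t - 2 * s * κ * G.dist v w = Psi G L κ s v t) :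
    slowCond G L κ w t := by
  obtain ⟨x, hadj, hx⟩ := hconn.exists_adj_dist_add_one_eq hne.symm
  have hx' : (G.dist v x : ℝ) + 1 = G.dist v w := by exact_mod_cast hx
  have hsκ : 0 ≤ 2 * (s : ℝ) * κ := by positivity
  refine ⟨s, ⟨x, hadj, ?_⟩, fun y hy => ?_⟩
  · rw [← hx'] at hw
    linarith [le_psi G L κ s v x t]
  · have hy' : (G.dist v y : ℝ) ≤ G.dist v w + 1 := by exact_mod_cast hy.dist_le_add_one v
    nlinarith [le_psi G L κ s v y t, mul_le_mul_of_nonneg_left hy' hsκ]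

lemma fastCond_of_eq_xi (hconn : G.Connected) (hκ : 0 ≤ κ) {k : ℕ} {v z : V} {t : ℝ}
    (hne : z ≠ v) (hz : L v t - L z t - (2 * k + 1) * κ * G.dist v z = Xi G L κ k v t) :
    fastCond G L κ z t := by
  obtain ⟨x, hadj, hx⟩ := hconn.exists_adj_dist_add_one_eq hne.symm
  have hx' : (G.dist v x : ℝ) + 1 = G.dist v z := by exact_mod_cast hx
  have hkκ : 0 ≤ (2 * (k : ℝ) + 1) * κ := by positivity
  refine ⟨k, ⟨x, hadj, ?_⟩, fun y hy => ?_⟩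
  · rw [← hx'] at hz
    linarith [le_xi G L κ k v x t]
  · have hy' : (G.dist v y : ℝ) ≤ G.dist v z + 1 := by exact_mod_cast hy.dist_le_add_one v
    nlinarith [le_xi G L κ k v y t, mul_le_mul_of_nonneg_left hy' hkκ]

lemma fastCond_of_psi_eq_psiMax (hconn : G.Connected) (hκ : 0 ≤ κ) {k : ℕ} {v : V} {t : ℝ}
    (hpos : 0 < Psi G L κ (k + 1) v t) (hmax : Psi G L κ (k + 1) v t = PsiMax G L κ (k + 1) t)
    (hxi : Xi G L κ k v t ≤ 0) : fastCond G L κ v t := by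
  obtain ⟨w, hw⟩ := exists_eq_psi G L κ (k + 1) v t
  have hne : w ≠ v := by
    rintro rfl
    simp only [sub_self, SimpleGraph.dist_self, CharP.cast_eq_zero, mul_zero] at hw
    linarith
  obtain ⟨x, hadj, hx⟩ := hconn.exists_adj_dist_add_one_eq hne
  have hx' : (G.dist x w : ℝ) + 1 = G.dist v w := by
    rw [SimpleGraph.dist_comm (u := x), SimpleGraph.dist_comm (u := v)]
    exact_mod_cast hx
  refine ⟨k, ⟨x, hadj, ?_⟩, fun y hy => ?_⟩
  · have hxw := (le_psi G L κ (k + 1) x w t).trans ((psi_le_psiMax G L κ (k + 1) x t).trans hmax.ge)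
    rw [← hw, ← hx'] at hxw
    push_cast at hxw
    nlinarith
  · have hvy := le_xi G L κ k v y t
    rw [SimpleGraph.dist_eq_one_iff_adj.2 hy, Nat.cast_one, mul_one] at hvy
    linarith

end Potentials

section Dynamics

variable [Fintype V] [Nonempty V] {G : SimpleGraph V} {L : V → ℝ → ℝ} {κ ρ μ : ℝ}

lemma psi_le_psi_add_mul (hconn : G.Connected) (hκ : 0 ≤ κ) (hρ : 0 ≤ ρ)
    (hdiff : ∀ v, Differentiable ℝ (L v)) (hone : ∀ v u, 0 ≤ u → 1 ≤ deriv (L v) u)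
    (hslow : ∀ v u, 0 ≤ u → slowCond G L κ v u → deriv (L v) u ≤ 1 + ρ)
    (s : ℕ) (v : V) {a b : ℝ} (ha : 0 ≤ a) (hab : a ≤ b) :
    Psi G L κ s v b ≤ Psi G L κ s v a + ρ * (b - a) := by
  refine le_add_mul_of_crossing (F := fun w u => L w u - L v u - 2 * s * κ * G.dist v w)
    (fun w x => hasDerivAt_sub_sub_const hdiff w v _ x) (fun w x => le_psi G L κ s v w x)
    (exists_eq_psi G L κ s v) hab le_rfl fun c hc _ _ w hw => ?_
  have hc0 : 0 ≤ c := ha.trans hc.1.le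
  rcases eq_or_ne w v with rfl | hne
  · linarith
  · linarith [hslow w c hc0 (slowCond_of_eq_psi hconn hκ hne hw), hone v c hc0]

lemma psiMax_le_psiMax_add_mul (hconn : G.Connected) (hκ : 0 ≤ κ) (hρ : 0 ≤ ρ)
    (hdiff : ∀ v, Differentiable ℝ (L v)) (hone : ∀ v u, 0 ≤ u → 1 ≤ deriv (L v) u)
    (hslow : ∀ v u, 0 ≤ u → slowCond G L κ v u → deriv (L v) u ≤ 1 + ρ)
    (s : ℕ) {a b : ℝ} (ha : 0 ≤ a) (hab : a ≤ b) :
    PsiMax G L κ s b ≤ PsiMax G L κ s a + ρ * (b - a) :=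
  Finset.sup'_le _ _ fun v _ =>
    (psi_le_psi_add_mul hconn hκ hρ hdiff hone hslow s v ha hab).trans
      (by linarith [psi_le_psiMax G L κ s v a])

/-- The extremal pair `(w, z)` consists of a slow node `w` ahead of `v` and a fast node `z`
behind it. -/
lemma psi_add_xi_le_add_mul (hconn : G.Connected) (hκ : 0 ≤ κ)
    (hdiff : ∀ v, Differentiable ℝ (L v))
    (hfast : ∀ v u, 0 ≤ u → fastCond G L κ v u → 1 + μ ≤ deriv (L v) u)
    (hslow : ∀ v u, 0 ≤ u → slowCond G L κ v u → deriv (L v) u ≤ 1 + ρ)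
    (k : ℕ) (v : V) {a b : ℝ} (ha : 0 ≤ a) (hab : a ≤ b)
    (hpos : ∀ r ∈ Ioo a b, 0 < Psi G L κ (k + 1) v r ∧ 0 < Xi G L κ k v r) :
    Psi G L κ (k + 1) v b + Xi G L κ k v b
      ≤ Psi G L κ (k + 1) v a + Xi G L κ k v a + (ρ - μ) * (b - a) := by
  refine le_add_mul_of_crossing (ι := V × V)
    (F := fun p u => (L p.1 u - L v u - 2 * ((k + 1 : ℕ) : ℝ) * κ * G.dist v p.1)
      + (L v u - L p.2 u - (2 * k + 1) * κ * G.dist v p.2))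
    (fun p x => (hasDerivAt_sub_sub_const hdiff p.1 v _ x).add
      (hasDerivAt_sub_sub_const hdiff v p.2 _ x))
    (fun p x => add_le_add (le_psi G L κ _ v p.1 x) (le_xi G L κ k v p.2 x)) (fun x => ?_) hab
    le_rfl fun c hc _ _ ⟨w, z⟩ hwz => ?_
  · obtain ⟨w, hw⟩ := exists_eq_psi G L κ (k + 1) v x
    obtain ⟨z, hz⟩ := exists_eq_xi G L κ k v x
    exact ⟨(w, z), by simp only [hw, hz]⟩
  · have hc0 : 0 ≤ c := ha.trans hc.1.le
    obtain ⟨hψ, hξ⟩ := hpos c hc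
    have hw_le := le_psi G L κ (k + 1) v w c
    have hz_le := le_xi G L κ k v z c
    have hw : L w c - L v c - 2 * ((k + 1 : ℕ) : ℝ) * κ * G.dist v w = Psi G L κ (k + 1) v c := by
      linarith
    have hz : L v c - L z c - (2 * k + 1) * κ * G.dist v z = Xi G L κ k v c := by linarith
    have hwv : w ≠ v := by rintro rfl; simp at hw; linarith
    have hzv : z ≠ v := by rintro rfl; simp at hz; linarith
    linarith [hslow w c hc0 (slowCond_of_eq_psi hconn hκ hwv hw),
      hfast z c hc0 (fastCond_of_eq_xi hconn hκ hzv hz)]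

lemma exists_psi_add_xi_le_add_mul (hconn : G.Connected) (hκ : 0 ≤ κ)
    (hdiff : ∀ v, Differentiable ℝ (L v))
    (hfast : ∀ v u, 0 ≤ u → fastCond G L κ v u → 1 + μ ≤ deriv (L v) u)
    (hslow : ∀ v u, 0 ≤ u → slowCond G L κ v u → deriv (L v) u ≤ 1 + ρ)
    (k : ℕ) (v : V) {a c : ℝ} (ha : 0 ≤ a) (hac : a ≤ c) :
    ∃ r ∈ Icc a c, (r = a ∨ Psi G L κ (k + 1) v r ≤ 0 ∨ Xi G L κ k v r ≤ 0) ∧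
      Psi G L κ (k + 1) v c + Xi G L κ k v c
        ≤ Psi G L κ (k + 1) v r + Xi G L κ k v r + (ρ - μ) * (c - r) := by
  have hA : IsClosed ({a} ∪ ({r | Psi G L κ (k + 1) v r ≤ 0} ∪ {r | Xi G L κ k v r ≤ 0})) :=
    isClosed_singleton.union ((isClosed_le (continuous_psi hdiff _ v) continuous_const).union
      (isClosed_le (continuous_xi hdiff k v) continuous_const))
  obtain ⟨r, hr, hrA, hafter⟩ := exists_last_mem hA (Or.inl rfl) hac
  refine ⟨r, hr, hrA, psi_add_xi_le_add_mul hconn hκ hdiff hfast hslow k v (ha.trans hr.1) hr.2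
    fun u hu => ?_⟩
  exact (by simpa [not_or] using hafter u hu : ¬u = a ∧ _).2

/-- If `Ξ_v(c) > 0`, go back to the last time `r` at which `Ψ_v` or `Ξ_v` vanished (or to `t₀`);
the decay of `Ψ_v + Ξ_v` since `r` keeps `Ψ_v(c)` strictly below the crossing value. -/
lemma xi_nonpos_of_crossing (hconn : G.Connected) (hκ : 0 ≤ κ) (hρ : 0 ≤ ρ)
    (hdiff : ∀ v, Differentiable ℝ (L v)) (hone : ∀ v u, 0 ≤ u → 1 ≤ deriv (L v) u)
    (hfast : ∀ v u, 0 ≤ u → fastCond G L κ v u → 1 + μ ≤ deriv (L v) u)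
    (hslow : ∀ v u, 0 ≤ u → slowCond G L κ v u → deriv (L v) u ≤ 1 + ρ)
    {k : ℕ} {ψ : ℝ} (hψ : ∀ t, 0 ≤ t → PsiMax G L κ k t ≤ ψ) {t₀ c : ℝ} (ht₀ : 0 ≤ t₀)
    (ht₀c : t₀ ≤ c) (hcψ : μ * (c - t₀) ≤ ψ)
    (hcross : ψ + (ρ - μ) * (c - t₀) < PsiMax G L κ (k + 1) c)
    (hhist : ∀ u ∈ Icc t₀ c,
      PsiMax G L κ (k + 1) u - (ρ - μ) * u ≤ PsiMax G L κ (k + 1) c - (ρ - μ) * c)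
    {v : V} (hv : Psi G L κ (k + 1) v c = PsiMax G L κ (k + 1) c) : Xi G L κ k v c ≤ 0 := by
  by_contra! hξc
  obtain ⟨r, hr, hbad, hdecay⟩ :=
    exists_psi_add_xi_le_add_mul hconn hκ hdiff hfast hslow k v ht₀ ht₀c
  have hr0 : 0 ≤ r := ht₀.trans hr.1
  have hEr := (psi_succ_add_xi_le_psiMax (L := L) hconn hκ k v r).trans (hψ r hr0)
  rcases hbad with rfl | hψr | hξr
  · linarith
  · have hgrow := psi_le_psi_add_mul hconn hκ hρ hdiff hone hslow (k + 1) v hr0 hr.2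
    have hξr0 := xi_nonneg G L κ k v r
    -- `Ψ_v(c) ≤ ρ (c - r)` and `Ψ_v(c) ≤ ψ + (ρ - μ)(c - r)` give `μ Ψ_v(c) ≤ ρ ψ`
    nlinarith [mul_nonneg hρ (sub_nonneg.2 hr.1)]
  · linarith [hhist r hr, psi_le_psiMax G L κ (k + 1) v r]

lemma psiMax_succ_le_add_mul (hconn : G.Connected) (hκ : 0 ≤ κ) (hρ : 0 ≤ ρ) (hμ : 0 ≤ μ)
    (hdiff : ∀ v, Differentiable ℝ (L v)) (hone : ∀ v u, 0 ≤ u → 1 ≤ deriv (L v) u)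
    (hfast : ∀ v u, 0 ≤ u → fastCond G L κ v u → 1 + μ ≤ deriv (L v) u)
    (hslow : ∀ v u, 0 ≤ u → slowCond G L κ v u → deriv (L v) u ≤ 1 + ρ)
    {k : ℕ} {ψ : ℝ} (hψ : ∀ t, 0 ≤ t → PsiMax G L κ k t ≤ ψ) {t₀ t : ℝ} (ht₀ : 0 ≤ t₀)
    (ht₀t : t₀ ≤ t) (htψ : μ * (t - t₀) ≤ ψ) :
    PsiMax G L κ (k + 1) t ≤ ψ + (ρ - μ) * (t - t₀) := by
  refine le_add_mul_of_crossing (ι := V × V)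
    (F := fun p u => L p.2 u - L p.1 u - 2 * ((k + 1 : ℕ) : ℝ) * κ * G.dist p.1 p.2)
    (fun p x => hasDerivAt_sub_sub_const hdiff p.2 p.1 _ x)
    (fun p x => (le_psi G L κ _ p.1 p.2 x).trans (psi_le_psiMax G L κ _ p.1 x)) (fun x => ?_)
    ht₀t ((psiMax_succ_le_psiMax hconn hκ k t₀).trans (hψ t₀ ht₀))
    fun c hc hcross hhist ⟨v, w⟩ hvw => ?_
  · obtain ⟨v, hv⟩ := exists_psi_eq_psiMax G L κ (k + 1) x
    obtain ⟨w, hw⟩ := exists_eq_psi G L κ (k + 1) v x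
    exact ⟨(v, w), hw.trans hv⟩
  · have hc0 : 0 ≤ c := ht₀.trans hc.1.le
    have hcψ : μ * (c - t₀) ≤ ψ := by nlinarith [hc.2]
    have hv : Psi G L κ (k + 1) v c = PsiMax G L κ (k + 1) c :=
      (psi_le_psiMax G L κ _ v c).antisymm (hvw ▸ le_psi G L κ _ v w c)
    have hpos : 0 < PsiMax G L κ (k + 1) c := by nlinarith [mul_nonneg hρ (sub_nonneg.2 hc.1.le)]
    have hwv : w ≠ v := by rintro rfl; simp at hvw; linarith
    have hξ := xi_nonpos_of_crossing hconn hκ hρ hdiff hone hfast hslow hψ ht₀ hc.1.le hcψ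
      hcross hhist hv
    linarith [hslow w c hc0 (slowCond_of_eq_psi hconn hκ hwv (hvw.trans hv.symm)),
      hfast v c hc0 (fastCond_of_psi_eq_psiMax hconn hκ (hv ▸ hpos) hv hξ)]

end Dynamics

/-- bound on `Ψ^s` in terms of a uniform bound `ψ` on `Ψ^{s-1}`. -/
theorem stmt_13 [Fintype V] [Nonempty V] (G : SimpleGraph V) (hconn : G.Connected)
    (L : V → ℝ → ℝ) (κ ρ μ : ℝ) (hκ : 0 < κ) (hρ : 0 < ρ) (hρμ : ρ < μ)
    (hdiff : ∀ v, Differentiable ℝ (L v))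
    (hrate : ∀ v u, 0 ≤ u → 1 ≤ deriv (L v) u ∧ deriv (L v) u ≤ (1 + μ) * (1 + ρ))
    (hfastI : ∀ v u, 0 ≤ u → fastCond G L κ v u → 1 + μ ≤ deriv (L v) u)
    (hslowI : ∀ v u, 0 ≤ u → slowCond G L κ v u → deriv (L v) u ≤ 1 + ρ)
    (s : ℕ) (hs : 1 ≤ s) (ψ : ℝ) (hψ : ∀ t, 0 ≤ t → PsiMax G L κ (s - 1) t ≤ ψ) :
    (∀ t, 0 ≤ t → t ≤ ψ / μ → PsiMax G L κ s t ≤ PsiMax G L κ s 0 + ρ / μ * ψ) ∧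
    (∀ t, ψ / μ < t → PsiMax G L κ s t ≤ ρ / μ * ψ) := by
  obtain ⟨k, rfl⟩ := Nat.exists_eq_add_of_le' hs
  rw [Nat.add_sub_cancel] at hψ
  have hμ : 0 < μ := hρ.trans hρμ
  have hψμ : 0 ≤ ψ / μ := div_nonneg ((psiMax_nonneg G L κ k 0).trans (hψ 0 le_rfl)) hμ.le
  have hone v u hu := (hrate v u hu).1
  refine ⟨fun t ht htψ => ?_, fun t ht => ?_⟩
  · calc PsiMax G L κ (k + 1) t ≤ PsiMax G L κ (k + 1) 0 + ρ * (t - 0) :=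
          psiMax_le_psiMax_add_mul hconn hκ.le hρ.le hdiff hone hslowI _ le_rfl ht
      _ ≤ PsiMax G L κ (k + 1) 0 + ρ / μ * ψ := by
          rw [sub_zero, div_mul_comm, mul_comm]
          gcongr
  · calc PsiMax G L κ (k + 1) t ≤ ψ + (ρ - μ) * (t - (t - ψ / μ)) :=
          psiMax_succ_le_add_mul hconn hκ.le hρ.le hμ.le hdiff hone hfastI hslowI hψ
            (by linarith) (by linarith) (by rw [sub_sub_cancel, mul_div_cancel₀ _ hμ.ne'])
      _ = ρ / μ * ψ := by field_simp; ring
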